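/- Let n ≥ 1, m ≥ 1, 𝔞 ∈ A_n(m), and i, j ∈ M(𝔞). Then T_i(𝔞) = T_j(𝔞) if and only if i and j lie in the same maximal interval of consecutive integers of M(𝔞). Consequently, the number of distinct transversal chains containing 𝔞 equals the number of maximal intervals of consecutive integers of M(𝔞). -/
import Mathlib


/- Common definitions following K. O'Hara's spread/degree and the signature
   refinement; elements of A_n(m) are lists of naturals of length n+1 and sum m. -/

namespace OHara

/-- The spread of `a = (a_0, …, a_n)`: the maximum of `a_i + a_{i+1}` over `0 ≤ i ≤ n-1`
(`0` if the list has length ≤ 1). -/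
def sprL (a : List ℕ) : ℕ :=
  (Finset.range (a.length - 1)).sup (fun i => a.getD i 0 + a.getD (i + 1) 0)

/-- `M(a)`: the set of left indices of maximal pairs. -/
def Mset (a : List ℕ) : Finset ℕ :=
  (Finset.range (a.length - 1)).filter (fun i => a.getD i 0 + a.getD (i + 1) 0 = sprL a)

/-- The connected component (maximal interval of consecutive integers) of `i` inside `S`. -/
def compF (S : Finset ℕ) (i : ℕ) : Finset ℕ :=
  S.filter (fun j => Finset.Icc (min i j) (max i j) ⊆ S)

/-- The left endpoints of the maximal intervals of consecutive integers of `S`. -/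
def leftEnds (S : Finset ℕ) : Finset ℕ :=
  S.filter (fun i => i = 0 ∨ (i - 1) ∉ S)

/-- O'Hara's degree: the sum over the maximal intervals `D` of `M(a)` of `⌈|D|/2⌉`. -/
def ecdL (a : List ℕ) : ℕ :=
  ∑ i ∈ leftEnds (Mset a), ((compF (Mset a) i).card + 1) / 2

/-- The set of active indices `Act(a) = M(a) ∪ (1 + M(a))`. -/
def ActF (a : List ℕ) : Finset ℕ :=
  Mset a ∪ (Mset a).image (· + 1)

/-- An index `j` survives in `ω(a)` iff it is not active, or it is the left endpoint `c` of a
maximal interval `D = [c, c+d]` of `M(a)` with `d` odd (i.e. `|D|` even). -/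
def survivesB (a : List ℕ) (j : ℕ) : Bool :=
  decide (j ∉ ActF a ∨ (j ∈ leftEnds (Mset a) ∧ Even (compF (Mset a) j).card))

/-- `ω(a)`: the result of removing from `a` the largest possible number of maximal pairs. -/
def omegaL (a : List ℕ) : List ℕ :=
  ((List.range a.length).filter (fun j => survivesB a j)).map (fun j => a.getD j 0)

/-- Fuel-driven recursion computing the signature (the fuel `a.length` in `sigmaL`
always suffices, since `ω` shortens a list of length ≥ 3 by at least 2). -/
def sigmaAux : ℕ → List ℕ → List ℕ
  | _, [] => []
  | 0, a => [a.sum]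
  | fuel + 1, a =>
    if a.length ≤ 2 then [a.sum]
    else List.replicate (ecdL a - 1) 0 ++ [sprL a - sprL (omegaL a)] ++ sigmaAux fuel (omegaL a)

/-- The signature `σ(a)`. -/
def sigmaL (a : List ℕ) : List ℕ := sigmaAux a.length a

/-- `m = Σ_{j=0}^k (j+1)·d_j` determined by a signature `(d_0, …, d_k)`. -/
def mOf (ds : List ℕ) : ℕ := ∑ j ∈ Finset.range ds.length, (j + 1) * ds.getD j 0

/-- `Q_n(d_0, …, d_k)`: the set of elements of `A_n(m)` of signature `(d_0, …, d_k)`. -/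
def Qset (n : ℕ) (ds : List ℕ) : Set (List ℕ) :=
  {a | a.length = n + 1 ∧ a.sum = mOf ds ∧ sigmaL a = ds}

/-- The rank `rk(a) = Σ i·a_i`. -/
def rkL (a : List ℕ) : ℕ := ∑ i ∈ Finset.range a.length, i * a.getD i 0

/-- `b` covers `a` in `A_n(m)`: `b` is obtained from `a` by replacing some consecutive pair
`(a_i, a_{i+1})` by `(a_i - 1, a_{i+1} + 1)`. -/
def coversL (b a : List ℕ) : Prop :=
  ∃ i, i + 1 < a.length ∧ 0 < a.getD i 0 ∧
    b = (a.set i (a.getD i 0 - 1)).set (i + 1) (a.getD (i + 1) 0 + 1)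

/-- Normalization phase of the raising algorithm: starting at index `i ∈ M(a)`, repeatedly
replace `i` by `i - 1` as long as `i ≥ 1` and `a_{i+1} = a_{i-1}`. -/
def rnormIdx (a : List ℕ) : ℕ → ℕ
  | 0 => 0
  | i + 1 => if a.getD (i + 2) 0 = a.getD i 0 then rnormIdx a i else i + 1

/-- One move of the raising algorithm from `(a, i)` with `i ∈ M(a)`: after normalizing the
index, either halt (`none`, at an initial element) or perform one step. -/
def raiseMove (a : List ℕ) (i : ℕ) : Option (List ℕ × ℕ) :=
  let j := rnormIdx a i
  if a.getD (j + 1) 0 = 0 then none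
  else some ((a.set j (a.getD j 0 + 1)).set (j + 1) (a.getD (j + 1) 0 - 1), j)

/-- The list of elements produced by iterating the raising algorithm (including the start). -/
def raiseList : ℕ → List ℕ → ℕ → List (List ℕ)
  | 0, a, _ => [a]
  | fuel + 1, a, i =>
    match raiseMove a i with
    | none => [a]
    | some (a', j) => a :: raiseList fuel a' j

/-- Normalization phase of the lowering algorithm: starting at index `i ∈ M(a)`, repeatedly
replace `i` by `i + 1` as long as `i ≤ n - 2` and `a_i = a_{i+2}` (fuel-driven). -/
def lnormIdx (a : List ℕ) : ℕ → ℕ → ℕ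
  | 0, i => i
  | fuel + 1, i =>
    if i + 2 < a.length ∧ a.getD i 0 = a.getD (i + 2) 0 then lnormIdx a fuel (i + 1) else i

/-- One move of the lowering algorithm from `(a, i)` with `i ∈ M(a)`: after normalizing the
index, either halt (`none`, at a terminal element) or perform one step. -/
def lowerMove (a : List ℕ) (i : ℕ) : Option (List ℕ × ℕ) :=
  let j := lnormIdx a a.length i
  if a.getD j 0 = 0 then none
  else some ((a.set j (a.getD j 0 - 1)).set (j + 1) (a.getD (j + 1) 0 + 1), j)

/-- The list of elements produced by iterating the lowering algorithm (including the start). -/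
def lowerList : ℕ → List ℕ → ℕ → List (List ℕ)
  | 0, a, _ => [a]
  | fuel + 1, a, i =>
    match lowerMove a i with
    | none => [a]
    | some (a', j) => a :: lowerList fuel a' j

/-- The colors of the successive covering relations produced by the lowering algorithm:
a lowering step at index `j` replaces `(a_j, a_{j+1})` by `(a_j - 1, a_{j+1} + 1)` and has
color `j + 1`. -/
def lowerColors : ℕ → List ℕ → ℕ → List ℕ
  | 0, _, _ => []
  | fuel + 1, a, i =>
    match lowerMove a i with
    | none => []
    | some (a', j) => (j + 1) :: lowerColors fuel a' j

/-- The transversal chain `T_i(a)`: the elements obtained from `a` by the raising algorithm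
together with those obtained by the lowering algorithm, both started at index `i ∈ M(a)`.
(The fuels `rk(a)` and `a.length * a.sum` are always sufficient, since each raising move
decreases the rank by 1 and each lowering move increases it by 1, within `[0, n·m]`.) -/
def Tset (a : List ℕ) (i : ℕ) : Set (List ℕ) :=
  {x | x ∈ raiseList (rkL a) a i ∨ x ∈ lowerList (a.length * a.sum) a i}

end OHara

namespace OHara
set_option linter.dupNamespace false

lemma getD_set_ne (a : List ℕ) {i j : ℕ} (v : ℕ) (h : i ≠ j) :
    (a.set i v).getD j 0 = a.getD j 0 := by
  simp [List.getD, List.getElem?_set_ne h]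

lemma getD_set_self (a : List ℕ) {i : ℕ} (v : ℕ) (h : i < a.length) :
    (a.set i v).getD i 0 = v := by
  simp [List.getD, List.getElem?_set_self, h]

lemma mem_Mset {a : List ℕ} {i : ℕ} :
    i ∈ Mset a ↔ i + 1 < a.length ∧ a.getD i 0 + a.getD (i + 1) 0 = sprL a := by
  simp only [Mset, Finset.mem_filter, Finset.mem_range]
  constructor
  · rintro ⟨h1, h2⟩; exact ⟨by omega, h2⟩
  · rintro ⟨h1, h2⟩; exact ⟨by omega, h2⟩

lemma pair_le_spr {a : List ℕ} {i : ℕ} (h : i + 1 < a.length) :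
    a.getD i 0 + a.getD (i + 1) 0 ≤ sprL a :=
  Finset.le_sup (f := fun i => a.getD i 0 + a.getD (i + 1) 0)
    (Finset.mem_range.2 (by omega))

lemma mem_compF {S : Finset ℕ} {i j : ℕ} :
    j ∈ compF S i ↔ j ∈ S ∧ Finset.Icc (min i j) (max i j) ⊆ S := by
  simp [compF]

lemma self_mem_compF {S : Finset ℕ} {i : ℕ} (h : i ∈ S) : i ∈ compF S i := by
  refine mem_compF.2 ⟨h, ?_⟩
  intro x hx
  simp only [Finset.mem_Icc] at hx
  have : x = i := by omega
  rwa [this]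

lemma Icc_trans {S : Finset ℕ} {i j k : ℕ}
    (h1 : Finset.Icc (min i j) (max i j) ⊆ S)
    (h2 : Finset.Icc (min j k) (max j k) ⊆ S) :
    Finset.Icc (min i k) (max i k) ⊆ S := by
  intro x hx
  simp only [Finset.mem_Icc] at hx
  have : (min i j ≤ x ∧ x ≤ max i j) ∨ (min j k ≤ x ∧ x ≤ max j k) := by omega
  rcases this with h | h
  · exact h1 (Finset.mem_Icc.2 h)
  · exact h2 (Finset.mem_Icc.2 h)

lemma Icc_symm {S : Finset ℕ} {i j : ℕ}
    (h : Finset.Icc (min i j) (max i j) ⊆ S) :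
    Finset.Icc (min j i) (max j i) ⊆ S := by
  rwa [min_comm, max_comm]

lemma compF_eq_of_mem {S : Finset ℕ} {i j : ℕ} (h : j ∈ compF S i) :
    compF S j = compF S i := by
  obtain ⟨hjS, hIcc⟩ := mem_compF.1 h
  ext k
  simp only [mem_compF]
  constructor
  · rintro ⟨hk, hk2⟩
    exact ⟨hk, Icc_trans hIcc hk2⟩
  · rintro ⟨hk, hk2⟩
    exact ⟨hk, Icc_trans (Icc_symm hIcc) hk2⟩

lemma isLE_unique {S : Finset ℕ} {i c d : ℕ}
    (hc : c ∈ compF S i) (hd : d ∈ compF S i)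
    (hc0 : c = 0 ∨ c - 1 ∉ S) (hd0 : d = 0 ∨ d - 1 ∉ S) : c = d := by
  obtain ⟨hcS, hcI⟩ := mem_compF.1 hc
  obtain ⟨hdS, hdI⟩ := mem_compF.1 hd
  have hcd : Finset.Icc (min c d) (max c d) ⊆ S := Icc_trans (Icc_symm hcI) hdI
  rcases lt_trichotomy c d with h | h | h
  · exfalso
    have : d - 1 ∈ S := hcd (Finset.mem_Icc.2 (by omega))
    rcases hd0 with h0 | h0 <;> [omega; exact h0 this]
  · exact h
  · exfalso
    have : c - 1 ∈ S := hcd (Finset.mem_Icc.2 (by omega))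
    rcases hc0 with h0 | h0 <;> [omega; exact h0 this]

lemma isRE_unique {S : Finset ℕ} {i c d : ℕ}
    (hc : c ∈ compF S i) (hd : d ∈ compF S i)
    (hc0 : c + 1 ∉ S) (hd0 : d + 1 ∉ S) : c = d := by
  obtain ⟨hcS, hcI⟩ := mem_compF.1 hc
  obtain ⟨hdS, hdI⟩ := mem_compF.1 hd
  have hcd : Finset.Icc (min c d) (max c d) ⊆ S := Icc_trans (Icc_symm hcI) hdI
  rcases lt_trichotomy c d with h | h | h
  · exact absurd (hcd (Finset.mem_Icc.2 (by omega))) hc0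
  · exact h
  · exact absurd (hcd (Finset.mem_Icc.2 (by omega))) hd0

end OHara
namespace OHara
set_option linter.dupNamespace false

lemma rnormIdx_le (a : List ℕ) (i : ℕ) : rnormIdx a i ≤ i := by
  induction i with
  | zero => simp [rnormIdx]
  | succ i ih =>
    rw [rnormIdx]
    split
    · omega
    · omega

lemma mem_of_mem_compF {S : Finset ℕ} {i j : ℕ} (h : j ∈ compF S i) : j ∈ S :=
  (mem_compF.1 h).1

lemma succ_mem_compF {S : Finset ℕ} {i : ℕ} (hi : i ∈ S) (hi1 : i + 1 ∈ S) :
    i ∈ compF S (i + 1) := by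
  refine mem_compF.2 ⟨hi, ?_⟩
  intro x hx
  simp only [Finset.mem_Icc] at hx
  have : x = i ∨ x = i + 1 := by omega
  rcases this with rfl | rfl <;> assumption

lemma rnormIdx_spec {a : List ℕ} {i : ℕ} (h : i ∈ Mset a) :
    rnormIdx a i ∈ compF (Mset a) i ∧
      (rnormIdx a i = 0 ∨ rnormIdx a i - 1 ∉ Mset a) := by
  induction i with
  | zero => exact ⟨self_mem_compF h, Or.inl rfl⟩
  | succ i ih =>
    obtain ⟨hlt, hpair⟩ := mem_Mset.1 h
    have hpair' : a.getD (i + 1) 0 + a.getD (i + 2) 0 = sprL a := hpair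
    rw [rnormIdx]
    split
    · rename_i heq
      have hiM : i ∈ Mset a := mem_Mset.2 ⟨by omega, by omega⟩
      have hcomp : i ∈ compF (Mset a) (i + 1) := succ_mem_compF hiM h
      obtain ⟨h1, h2⟩ := ih hiM
      refine ⟨?_, h2⟩
      rwa [compF_eq_of_mem hcomp] at h1
    · rename_i hne
      refine ⟨self_mem_compF h, Or.inr ?_⟩
      intro hiM
      obtain ⟨_, hpair2⟩ := mem_Mset.1 (show i ∈ Mset a by simpa using hiM)
      omega

lemma lnormIdx_lt {a : List ℕ} {fuel i : ℕ} (h : i + 1 < a.length) :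
    lnormIdx a fuel i + 1 < a.length := by
  induction fuel generalizing i with
  | zero => simpa [lnormIdx]
  | succ fuel ih =>
    rw [lnormIdx]
    split
    · rename_i hc
      exact ih (by omega)
    · exact h

lemma lnormIdx_spec {a : List ℕ} {fuel i : ℕ} (h : i ∈ Mset a)
    (hf : a.length ≤ fuel + i + 2) :
    lnormIdx a fuel i ∈ compF (Mset a) i ∧ lnormIdx a fuel i + 1 ∉ Mset a := by
  induction fuel generalizing i with
  | zero =>
    obtain ⟨hlt, hpair⟩ := mem_Mset.1 h
    rw [lnormIdx]
    refine ⟨self_mem_compF h, fun hmem => ?_⟩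
    obtain ⟨hlt', _⟩ := mem_Mset.1 hmem
    omega
  | succ fuel ih =>
    obtain ⟨hlt, hpair⟩ := mem_Mset.1 h
    rw [lnormIdx]
    split
    · rename_i hc
      obtain ⟨hc1, hc2⟩ := hc
      have hc2' : a.getD i 0 = a.getD (i + 1 + 1) 0 := hc2
      have hi1M : i + 1 ∈ Mset a := mem_Mset.2 ⟨by omega, by omega⟩
      obtain ⟨h1, h2⟩ := ih hi1M (by omega)
      have hcomp : i ∈ compF (Mset a) (i + 1) := succ_mem_compF h hi1M
      refine ⟨?_, h2⟩
      rw [compF_eq_of_mem hcomp]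
      exact h1
    · rename_i hc
      push_neg at hc
      refine ⟨self_mem_compF h, fun hmem => ?_⟩
      obtain ⟨hlt', hpair'⟩ := mem_Mset.1 hmem
      have hpair2 : a.getD (i + 1) 0 + a.getD (i + 2) 0 = sprL a := hpair'
      have := hc (by omega)
      omega

end OHara
namespace OHara
set_option linter.dupNamespace false

lemma rkL_set (a : List ℕ) {j : ℕ} (v : ℕ) (h : j < a.length) :
    rkL (a.set j v) + j * a.getD j 0 = rkL a + j * v := by
  unfold rkL
  rw [List.length_set]
  have hmem : j ∈ Finset.range a.length := Finset.mem_range.2 h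
  rw [← Finset.add_sum_erase _ _ hmem, ← Finset.add_sum_erase _ _ hmem]
  have hs : ∑ i ∈ (Finset.range a.length).erase j, i * (a.set j v).getD i 0
      = ∑ i ∈ (Finset.range a.length).erase j, i * a.getD i 0 := by
    refine Finset.sum_congr rfl fun i hi => ?_
    rw [getD_set_ne a v (Finset.ne_of_mem_erase hi).symm]
  rw [hs, getD_set_self a v h]
  ring

lemma rkL_raise {a : List ℕ} {j : ℕ} (h : j + 1 < a.length)
    (h0 : 0 < a.getD (j + 1) 0) :
    rkL ((a.set j (a.getD j 0 + 1)).set (j + 1) (a.getD (j + 1) 0 - 1)) + 1 = rkL a := by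
  obtain ⟨B, hB⟩ : ∃ B, a.getD (j + 1) 0 = B + 1 := ⟨_, (Nat.succ_pred_eq_of_pos h0).symm⟩
  rw [hB]
  simp only [Nat.add_sub_cancel]
  have hlb : (a.set j (a.getD j 0 + 1)).length = a.length := by simp
  have h1 := rkL_set (a.set j (a.getD j 0 + 1)) (j := j + 1) B (by omega)
  have h2 := rkL_set a (j := j) (a.getD j 0 + 1) (by omega)
  have hbj : (a.set j (a.getD j 0 + 1)).getD (j + 1) 0 = a.getD (j + 1) 0 :=
    getD_set_ne a _ (by omega)
  rw [hbj, hB] at h1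
  have e1 : (j + 1) * (B + 1) = (j + 1) * B + (j + 1) := by ring
  have e2 : j * (a.getD j 0 + 1) = j * a.getD j 0 + j := by ring
  linarith

lemma rkL_lower {a : List ℕ} {j : ℕ} (h : j + 1 < a.length)
    (h0 : 0 < a.getD j 0) :
    rkL ((a.set j (a.getD j 0 - 1)).set (j + 1) (a.getD (j + 1) 0 + 1)) = rkL a + 1 := by
  obtain ⟨A, hA⟩ : ∃ A, a.getD j 0 = A + 1 := ⟨_, (Nat.succ_pred_eq_of_pos h0).symm⟩
  rw [hA]
  simp only [Nat.add_sub_cancel]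
  have hlb : (a.set j A).length = a.length := by simp
  have h1 := rkL_set (a.set j A) (j := j + 1) (a.getD (j + 1) 0 + 1) (by omega)
  have h2 := rkL_set a (j := j) A (by omega)
  have hbj : (a.set j A).getD (j + 1) 0 = a.getD (j + 1) 0 := getD_set_ne a _ (by omega)
  rw [hbj] at h1
  rw [hA] at h2
  have e1 : (j + 1) * (a.getD (j + 1) 0 + 1) = (j + 1) * a.getD (j + 1) 0 + (j + 1) := by ring
  have e2 : j * (A + 1) = j * A + j := by ring
  linarith

lemma rkL_pos {a : List ℕ} {j : ℕ} (h : j + 1 < a.length)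
    (h0 : 0 < a.getD (j + 1) 0) : 0 < rkL a := by
  have : (j + 1) * a.getD (j + 1) 0 ≤ rkL a :=
    Finset.single_le_sum (f := fun i => i * a.getD i 0) (fun i _ => Nat.zero_le _)
      (Finset.mem_range.2 h)
  nlinarith

end OHara
namespace OHara
set_option linter.dupNamespace false

lemma raiseMove_eq_none {a : List ℕ} {i : ℕ} (h : a.getD (rnormIdx a i + 1) 0 = 0) :
    raiseMove a i = none := by
  unfold raiseMove
  exact if_pos h

lemma raiseMove_eq_some {a : List ℕ} {i : ℕ} (h : a.getD (rnormIdx a i + 1) 0 ≠ 0) :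
    raiseMove a i = some
      ((a.set (rnormIdx a i) (a.getD (rnormIdx a i) 0 + 1)).set (rnormIdx a i + 1)
        (a.getD (rnormIdx a i + 1) 0 - 1), rnormIdx a i) := by
  unfold raiseMove
  exact if_neg h

lemma raiseMove_some {a : List ℕ} {i : ℕ} {a' : List ℕ} {j : ℕ}
    (hi : i + 1 < a.length) (h : raiseMove a i = some (a', j)) :
    j = rnormIdx a i ∧ 0 < a.getD (j + 1) 0 ∧
      a' = (a.set j (a.getD j 0 + 1)).set (j + 1) (a.getD (j + 1) 0 - 1) ∧
      j + 1 < a.length ∧ a'.length = a.length ∧ rkL a' + 1 = rkL a := by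
  by_cases h0 : a.getD (rnormIdx a i + 1) 0 = 0
  · rw [raiseMove_eq_none h0] at h; exact absurd h (by simp)
  · rw [raiseMove_eq_some h0] at h
    simp only [Option.some.injEq, Prod.mk.injEq] at h
    obtain ⟨ha'', hj⟩ := h
    subst hj
    have ha' := ha''.symm
    have hjlt : rnormIdx a i + 1 < a.length := by have := rnormIdx_le a i; omega
    refine ⟨rfl, by omega, ha', hjlt, ?_, ?_⟩
    · rw [ha']; simp
    · rw [ha']; exact rkL_raise hjlt (by omega)

lemma lowerMove_eq_none {a : List ℕ} {i : ℕ} (h : a.getD (lnormIdx a a.length i) 0 = 0) :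
    lowerMove a i = none := by
  unfold lowerMove
  exact if_pos h

lemma lowerMove_eq_some {a : List ℕ} {i : ℕ} (h : a.getD (lnormIdx a a.length i) 0 ≠ 0) :
    lowerMove a i = some
      ((a.set (lnormIdx a a.length i) (a.getD (lnormIdx a a.length i) 0 - 1)).set
        (lnormIdx a a.length i + 1) (a.getD (lnormIdx a a.length i + 1) 0 + 1),
        lnormIdx a a.length i) := by
  unfold lowerMove
  exact if_neg h

lemma lowerMove_some {a : List ℕ} {i : ℕ} {a' : List ℕ} {j : ℕ}
    (hi : i + 1 < a.length) (h : lowerMove a i = some (a', j)) :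
    j = lnormIdx a a.length i ∧ 0 < a.getD j 0 ∧
      a' = (a.set j (a.getD j 0 - 1)).set (j + 1) (a.getD (j + 1) 0 + 1) ∧
      j + 1 < a.length ∧ a'.length = a.length ∧ rkL a' = rkL a + 1 := by
  by_cases h0 : a.getD (lnormIdx a a.length i) 0 = 0
  · rw [lowerMove_eq_none h0] at h; exact absurd h (by simp)
  · rw [lowerMove_eq_some h0] at h
    simp only [Option.some.injEq, Prod.mk.injEq] at h
    obtain ⟨ha'', hj⟩ := h
    subst hj
    have ha' := ha''.symm
    have hjlt : lnormIdx a a.length i + 1 < a.length := lnormIdx_lt hi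
    refine ⟨rfl, by omega, ha', hjlt, ?_, ?_⟩
    · rw [ha']; simp
    · rw [ha']; exact rkL_lower hjlt (by omega)

lemma self_mem_raiseList (fuel : ℕ) (a : List ℕ) (i : ℕ) : a ∈ raiseList fuel a i := by
  cases fuel with
  | zero => simp [raiseList]
  | succ fuel =>
    rw [raiseList]
    rcases h : raiseMove a i with _ | ⟨a', j⟩ <;> simp

lemma self_mem_lowerList (fuel : ℕ) (a : List ℕ) (i : ℕ) : a ∈ lowerList fuel a i := by
  cases fuel with
  | zero => simp [lowerList]
  | succ fuel =>
    rw [lowerList]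
    rcases h : lowerMove a i with _ | ⟨a', j⟩ <;> simp

lemma raiseList_of_none {fuel : ℕ} {a : List ℕ} {i : ℕ} (h : raiseMove a i = none) :
    raiseList fuel a i = [a] := by
  cases fuel with
  | zero => rfl
  | succ fuel => rw [raiseList, h]

lemma rk_le_of_mem_raiseList {fuel : ℕ} :
    ∀ {a : List ℕ} {i : ℕ} {x : List ℕ}, i + 1 < a.length →
      x ∈ raiseList fuel a i → rkL x ≤ rkL a := by
  induction fuel with
  | zero =>
    intro a i x _ hx
    simp only [raiseList, List.mem_singleton] at hx
    exact hx ▸ le_refl _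
  | succ fuel ih =>
    intro a i x hi hx
    rw [raiseList] at hx
    rcases h : raiseMove a i with _ | ⟨a', j⟩
    · rw [h] at hx
      simp only [List.mem_singleton] at hx
      exact hx ▸ le_refl _
    · rw [h] at hx
      simp only [List.mem_cons] at hx
      rcases hx with rfl | hx
      · exact le_refl _
      · obtain ⟨hj, _, _, hjlt, hlen, hrk⟩ := raiseMove_some hi h
        have := ih (a := a') (i := j) (x := x) (by omega) hx
        omega

lemma rk_ge_of_mem_lowerList {fuel : ℕ} :
    ∀ {a : List ℕ} {i : ℕ} {x : List ℕ}, i + 1 < a.length →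
      x ∈ lowerList fuel a i → rkL a ≤ rkL x := by
  induction fuel with
  | zero =>
    intro a i x _ hx
    simp only [lowerList, List.mem_singleton] at hx
    exact hx ▸ le_refl _
  | succ fuel ih =>
    intro a i x hi hx
    rw [lowerList] at hx
    rcases h : lowerMove a i with _ | ⟨a', j⟩
    · rw [h] at hx
      simp only [List.mem_singleton] at hx
      exact hx ▸ le_refl _
    · rw [h] at hx
      simp only [List.mem_cons] at hx
      rcases hx with rfl | hx
      · exact le_refl _
      · obtain ⟨hj, _, _, hjlt, hlen, hrk⟩ := lowerMove_some hi h
        have := ih (a := a') (i := j) (x := x) (by omega) hx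
        omega

lemma eq_head_of_rk_ge {fuel : ℕ} {a : List ℕ} {i : ℕ} {x : List ℕ}
    (hi : i + 1 < a.length) (hx : x ∈ raiseList fuel a i) (hr : rkL a ≤ rkL x) :
    x = a := by
  cases fuel with
  | zero => simpa [raiseList] using hx
  | succ fuel =>
    rw [raiseList] at hx
    rcases h : raiseMove a i with _ | ⟨a', j⟩
    · rw [h] at hx; simpa using hx
    · rw [h] at hx
      simp only [List.mem_cons] at hx
      rcases hx with rfl | hx
      · rfl
      · exfalso
        obtain ⟨hj, _, _, hjlt, hlen, hrk⟩ := raiseMove_some hi h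
        have := rk_le_of_mem_raiseList (a := a') (i := j) (x := x) (by omega) hx
        omega

lemma step_mem_raiseList {a : List ℕ} {i : ℕ} {a' : List ℕ} {j : ℕ}
    (hi : i + 1 < a.length) (h : raiseMove a i = some (a', j)) :
    a' ∈ raiseList (rkL a) a i := by
  obtain ⟨hj, h0, _, hjlt, hlen, hrk⟩ := raiseMove_some hi h
  have hpos : 0 < rkL a := rkL_pos hjlt (by omega)
  obtain ⟨t, ht⟩ : ∃ t, rkL a = t + 1 := ⟨_, (Nat.succ_pred_eq_of_pos hpos).symm⟩
  rw [ht, raiseList, h]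
  simp [self_mem_raiseList]

end OHara
namespace OHara
set_option linter.dupNamespace false

lemma raiseList_congr {fuel : ℕ} {a : List ℕ} {i j : ℕ} (h : rnormIdx a i = rnormIdx a j) :
    raiseList fuel a i = raiseList fuel a j := by
  have hm : raiseMove a i = raiseMove a j := by unfold raiseMove; rw [h]
  cases fuel with
  | zero => rfl
  | succ fuel => rw [raiseList, raiseList, hm]

lemma lowerList_congr {fuel : ℕ} {a : List ℕ} {i j : ℕ}
    (h : lnormIdx a a.length i = lnormIdx a a.length j) :
    lowerList fuel a i = lowerList fuel a j := by
  have hm : lowerMove a i = lowerMove a j := by unfold lowerMove; rw [h]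
  cases fuel with
  | zero => rfl
  | succ fuel => rw [lowerList, lowerList, hm]

lemma step_inj {a : List ℕ} {ci cj : ℕ}
    (hci : ci + 1 < a.length) (hcj : cj + 1 < a.length)
    (h0i : 0 < a.getD (ci + 1) 0) (h0j : 0 < a.getD (cj + 1) 0)
    (he : (a.set ci (a.getD ci 0 + 1)).set (ci + 1) (a.getD (ci + 1) 0 - 1)
        = (a.set cj (a.getD cj 0 + 1)).set (cj + 1) (a.getD (cj + 1) 0 - 1)) :
    ci = cj := by
  by_contra hne
  have hgd := congrArg (fun l => l.getD (ci + 1) 0) he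
  have hL : ((a.set ci (a.getD ci 0 + 1)).set (ci + 1) (a.getD (ci + 1) 0 - 1)).getD (ci + 1) 0
      = a.getD (ci + 1) 0 - 1 := by
    rw [getD_set_self _ _ (by simp; omega)]
  rw [hL] at hgd
  by_cases hc : ci + 1 = cj
  · have hR : ((a.set cj (a.getD cj 0 + 1)).set (cj + 1) (a.getD (cj + 1) 0 - 1)).getD (ci + 1) 0
        = a.getD cj 0 + 1 := by
      rw [getD_set_ne _ _ (by omega), hc, getD_set_self _ _ (by omega)]
    rw [hR, ← hc] at hgd
    omega
  · have hR : ((a.set cj (a.getD cj 0 + 1)).set (cj + 1) (a.getD (cj + 1) 0 - 1)).getD (ci + 1) 0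
        = a.getD (ci + 1) 0 := by
      rw [getD_set_ne _ _ (by omega), getD_set_ne _ _ (by omega)]
    rw [hR] at hgd
    omega

lemma leftEnd_zero {a : List ℕ} {c : ℕ} (hc : c ∈ Mset a)
    (hc0 : c = 0 ∨ c - 1 ∉ Mset a) (h0 : a.getD (c + 1) 0 = 0) : c = 0 := by
  by_contra hne
  obtain ⟨hlt, hpair⟩ := mem_Mset.1 hc
  rcases hc0 with h | h
  · exact hne h
  · apply h
    obtain ⟨d, hd⟩ : ∃ d, c = d + 1 := ⟨c - 1, by omega⟩
    subst hd
    have hle : a.getD d 0 + a.getD (d + 1) 0 ≤ sprL a := pair_le_spr (by omega)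
    have hp : a.getD (d + 1) 0 + a.getD (d + 1 + 1) 0 = sprL a := hpair
    simp only [Nat.add_sub_cancel]
    exact mem_Mset.2 ⟨by omega, by omega⟩

end OHara
namespace OHara
set_option linter.dupNamespace false

lemma mem_Tset_raise {a : List ℕ} {i : ℕ} {x : List ℕ}
    (h : x ∈ raiseList (rkL a) a i) : x ∈ Tset a i := Or.inl h

lemma rnorm_eq_of_Tset_eq {a : List ℕ} {i j : ℕ} (hi : i ∈ Mset a) (hj : j ∈ Mset a)
    (hT : Tset a i = Tset a j) : rnormIdx a i = rnormIdx a j := by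
  have hi1 : i + 1 < a.length := (mem_Mset.1 hi).1
  have hj1 : j + 1 < a.length := (mem_Mset.1 hj).1
  obtain ⟨hciC, hciL⟩ := rnormIdx_spec hi
  obtain ⟨hcjC, hcjL⟩ := rnormIdx_spec hj
  have hciM : rnormIdx a i ∈ Mset a := mem_of_mem_compF hciC
  have hcjM : rnormIdx a j ∈ Mset a := mem_of_mem_compF hcjC
  have hci1 : rnormIdx a i + 1 < a.length := by have := rnormIdx_le a i; omega
  have hcj1 : rnormIdx a j + 1 < a.length := by have := rnormIdx_le a j; omega
  by_cases hzi : a.getD (rnormIdx a i + 1) 0 = 0 <;>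
    by_cases hzj : a.getD (rnormIdx a j + 1) 0 = 0
  · rw [leftEnd_zero hciM hciL hzi, leftEnd_zero hcjM hcjL hzj]
  · exfalso
    have hmj := raiseMove_eq_some hzj
    obtain ⟨_, _, _, _, _, hrkj⟩ := raiseMove_some hj1 hmj
    have hxj : _ ∈ Tset a j := mem_Tset_raise (step_mem_raiseList hj1 hmj)
    rw [← hT] at hxj
    rcases hxj with hr | hl
    · rw [raiseList_of_none (raiseMove_eq_none hzi)] at hr
      simp only [List.mem_singleton] at hr
      rw [hr] at hrkj
      omega
    · have := rk_ge_of_mem_lowerList hi1 hl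
      omega
  · exfalso
    have hmi := raiseMove_eq_some hzi
    obtain ⟨_, _, _, _, _, hrki⟩ := raiseMove_some hi1 hmi
    have hxi : _ ∈ Tset a i := mem_Tset_raise (step_mem_raiseList hi1 hmi)
    rw [hT] at hxi
    rcases hxi with hr | hl
    · rw [raiseList_of_none (raiseMove_eq_none hzj)] at hr
      simp only [List.mem_singleton] at hr
      rw [hr] at hrki
      omega
    · have := rk_ge_of_mem_lowerList hj1 hl
      omega
  · have hmi := raiseMove_eq_some hzi
    have hmj := raiseMove_eq_some hzj
    obtain ⟨_, h0i, _, _, hleni, hrki⟩ := raiseMove_some hi1 hmi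
    obtain ⟨_, h0j, _, _, hlenj, hrkj⟩ := raiseMove_some hj1 hmj
    have hxi : _ ∈ Tset a i := mem_Tset_raise (step_mem_raiseList hi1 hmi)
    rw [hT] at hxi
    rcases hxi with hr | hl
    · have hpos : 0 < rkL a := by omega
      obtain ⟨t, ht⟩ : ∃ t, rkL a = t + 1 := ⟨_, (Nat.succ_pred_eq_of_pos hpos).symm⟩
      rw [ht, raiseList, hmj] at hr
      simp only [List.mem_cons] at hr
      rcases hr with heq | hr
      · exfalso
        rw [heq] at hrki
        omega
      · have hxixj := eq_head_of_rk_ge (a := _) (i := rnormIdx a j)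
          (by rw [hlenj]; exact hcj1) hr (by omega)
        exact step_inj hci1 hcj1 h0i h0j hxixj
    · exfalso
      have := rk_ge_of_mem_lowerList hj1 hl
      omega

lemma compF_eq_of_Tset_eq {a : List ℕ} {i j : ℕ} (hi : i ∈ Mset a) (hj : j ∈ Mset a)
    (hT : Tset a i = Tset a j) : compF (Mset a) i = compF (Mset a) j := by
  have hc := rnorm_eq_of_Tset_eq hi hj hT
  obtain ⟨hciC, _⟩ := rnormIdx_spec hi
  obtain ⟨hcjC, _⟩ := rnormIdx_spec hj
  rw [← compF_eq_of_mem hciC, hc, compF_eq_of_mem hcjC]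

lemma Tset_eq_of_compF_eq {a : List ℕ} {i j : ℕ} (hi : i ∈ Mset a) (hj : j ∈ Mset a)
    (hC : compF (Mset a) i = compF (Mset a) j) : Tset a i = Tset a j := by
  obtain ⟨hciC, hciL⟩ := rnormIdx_spec hi
  obtain ⟨hcjC, hcjL⟩ := rnormIdx_spec hj
  obtain ⟨hliC, hliR⟩ := lnormIdx_spec (fuel := a.length) hi (by omega)
  obtain ⟨hljC, hljR⟩ := lnormIdx_spec (fuel := a.length) hj (by omega)
  rw [hC] at hciC hliC
  have hr : rnormIdx a i = rnormIdx a j := isLE_unique hciC hcjC hciL hcjL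
  have hl : lnormIdx a a.length i = lnormIdx a a.length j := isRE_unique hliC hljC hliR hljR
  unfold Tset
  rw [raiseList_congr hr, lowerList_congr hl]

end OHara

namespace OHara
set_option linter.dupNamespace false

lemma mem_leftEnds {S : Finset ℕ} {c : ℕ} :
    c ∈ leftEnds S ↔ c ∈ S ∧ (c = 0 ∨ c - 1 ∉ S) := by
  simp [leftEnds]

lemma rnormIdx_mem_leftEnds {a : List ℕ} {i : ℕ} (hi : i ∈ Mset a) :
    rnormIdx a i ∈ leftEnds (Mset a) := by
  obtain ⟨hC, hL⟩ := rnormIdx_spec hi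
  exact mem_leftEnds.2 ⟨mem_of_mem_compF hC, hL⟩

end OHara

open OHara in
/-- For `i, j ∈ M(𝔞)`, the transversal chains `T_i(𝔞)` and `T_j(𝔞)` coincide iff `i` and
`j` lie in the same maximal interval of consecutive integers of `M(𝔞)`; consequently the
number of distinct transversal chains containing `𝔞` equals the number of maximal
intervals (components) of `M(𝔞)`. -/
theorem transversal_chains_through_a (n m : ℕ) (hn : 1 ≤ n) (hm : 1 ≤ m)
    (a : List ℕ) (hlen : a.length = n + 1) (hsum : a.sum = m) :
    (∀ i ∈ Mset a, ∀ j ∈ Mset a,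
      (Tset a i = Tset a j ↔ compF (Mset a) i = compF (Mset a) j)) ∧
    {T : Set (List ℕ) | ∃ i ∈ Mset a, T = Tset a i}.ncard = (leftEnds (Mset a)).card := by
  constructor
  · intro i hi j hj
    exact ⟨compF_eq_of_Tset_eq hi hj, Tset_eq_of_compF_eq hi hj⟩
  · have hset : {T : Set (List ℕ) | ∃ i ∈ Mset a, T = Tset a i}
        = Tset a '' ↑(leftEnds (Mset a)) := by
      ext T
      simp only [Set.mem_setOf_eq, Set.mem_image, Finset.mem_coe]
      constructor
      · rintro ⟨i, hi, rfl⟩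
        refine ⟨rnormIdx a i, rnormIdx_mem_leftEnds hi, ?_⟩
        obtain ⟨hC, _⟩ := rnormIdx_spec hi
        exact (Tset_eq_of_compF_eq (mem_of_mem_compF hC) hi (compF_eq_of_mem hC)).symm.symm
      · rintro ⟨c, hc, rfl⟩
        exact ⟨c, (mem_leftEnds.1 hc).1, rfl⟩
    rw [hset]
    rw [Set.ncard_image_of_injOn, Set.ncard_coe_finset]
    intro c hc d hd hT
    simp only [Finset.mem_coe] at hc hd
    obtain ⟨hcS, hcL⟩ := mem_leftEnds.1 hc
    obtain ⟨hdS, hdL⟩ := mem_leftEnds.1 hd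
    have hC := compF_eq_of_Tset_eq hcS hdS hT
    have hdC : d ∈ compF (Mset a) c := hC ▸ self_mem_compF hdS
    exact isLE_unique (self_mem_compF hcS) hdC hcL hdL
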